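/- Let $b \in L^1_{loc}(\mathbb{C})$ and let $f \geq 0$ be measurable. Then $C_b f(x) \leq 16 \sum_{t \in \{0,1/3\}^2} C_b^{\mathcal{D}^t} f(x)$ for all $x$, where the sum runs over the four shifted dyadic grids in $\mathbb{R}^2 \cong \mathbb{C}$. -/

import Mathlib

/-!
For either sign `σ`, the lattices `ℤ` and `ℤ + σ/3` cannot both come within `1/6` of a point, so
an interval of length `1/3` lies in a unit cell of one of them. Scaled by `2^k`, and since `𝒟^t`
is shifted by `(-1)^k t`, the disc of radius `|x - w|` about `x` lies in a cube `Q ∈ 𝒟^t` of side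
`2^k ≤ 16 |x - w|` for some `t ∈ {0, 1/3}²`. Hence the Cauchy kernel is dominated by
`16 ∑_t ∑_{Q ∈ 𝒟^t} |Q|^{-1/2} 𝟙_{Q × Q}`, and integrating against `|b(x) - b(w)| f(w)` gives the
dyadic commutators.
-/

open MeasureTheory ENNReal Set

noncomputable section

/-- The (positive) commutator of the Cauchy transform,
`C_b f(z) = ∫_ℂ (|b(z)-b(ζ)| / |z-ζ|) f(ζ) dA(ζ)`, for `f ≥ 0`. -/
def cauchyCommAbs (b : ℂ → ℂ) (f : ℂ → ℝ≥0∞) (z : ℂ) : ℝ≥0∞ :=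
  ∫⁻ w, (ENNReal.ofReal ‖b z - b w‖ / ENNReal.ofReal ‖z - w‖) * f w

/-- The cube `2^k([0,1)^2 + m + (-1)^k t)` of the shifted dyadic grid `𝒟^t` in `ℂ ≅ ℝ²`. -/
def cplxCube (t : ℝ × ℝ) (k : ℤ) (m : ℤ × ℤ) : Set ℂ :=
  {z | ((2 : ℝ) ^ k * (m.1 + (-1 : ℝ) ^ k * t.1) ≤ z.re ∧
          z.re < (2 : ℝ) ^ k * (m.1 + (-1 : ℝ) ^ k * t.1 + 1)) ∧
       ((2 : ℝ) ^ k * (m.2 + (-1 : ℝ) ^ k * t.2) ≤ z.im ∧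
          z.im < (2 : ℝ) ^ k * (m.2 + (-1 : ℝ) ^ k * t.2 + 1))}

/-- The dyadic commutator
`C_b^{𝒟^t} f(x) = ∑_{Q ∈ 𝒟^t} (|Q|^{1/2} ⨍_Q |b(x)-b(y)| f(y) dy) χ_Q(x)`. -/
def dyadicCauchyComm (b : ℂ → ℂ) (t : ℝ × ℝ) (f : ℂ → ℝ≥0∞) (x : ℂ) : ℝ≥0∞ :=
  ∑' (k : ℤ) (m : ℤ × ℤ),
    (cplxCube t k m).indicator (fun x' =>
      (volume (cplxCube t k m)) ^ ((1 : ℝ) / 2) *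
        ((volume (cplxCube t k m))⁻¹ *
          ∫⁻ y in cplxCube t k m, ENNReal.ofReal ‖b x' - b y‖ * f y)) x

abbrev gridShifts : Finset (ℝ × ℝ) := ({0, 1 / 3} : Finset ℝ) ×ˢ ({0, 1 / 3} : Finset ℝ)

lemma exists_Icc_subset_Ico_shift (u ε σ : ℝ) (hσ : σ = 1 ∨ σ = -1) (hε : ε ≤ 1 / 6) :
    ∃ τ ∈ ({0, 1 / 3} : Finset ℝ), ∃ j : ℤ,
      Icc (u - ε) (u + ε) ⊆ Ico (j + σ * τ) (j + σ * τ + 1) := by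
  have h0 : (⌊u⌋ : ℝ) ≤ u := Int.floor_le u
  have h1 : u < ⌊u⌋ + 1 := Int.lt_floor_add_one u
  rcases lt_or_ge u (⌊u⌋ + ε) with hlow | hlow
  · refine ⟨1 / 3, by simp, ?_⟩
    rcases hσ with rfl | rfl
    · exact ⟨⌊u⌋ - 1, fun v hv => by push_cast; constructor <;> linarith [hv.1, hv.2]⟩
    · exact ⟨⌊u⌋, fun v hv => by constructor <;> linarith [hv.1, hv.2]⟩
  rcases lt_or_ge (u + ε) (⌊u⌋ + 1) with hhigh | hhigh
  · exact ⟨0, by simp, ⌊u⌋, fun v hv => by constructor <;> linarith [hv.1, hv.2]⟩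
  · refine ⟨1 / 3, by simp, ?_⟩
    rcases hσ with rfl | rfl
    · exact ⟨⌊u⌋, fun v hv => by constructor <;> linarith [hv.1, hv.2]⟩
    · exact ⟨⌊u⌋ + 1, fun v hv => by push_cast; constructor <;> linarith [hv.1, hv.2]⟩

lemma exists_Icc_subset_Ico_shift_scaled (u r s σ : ℝ) (hσ : σ = 1 ∨ σ = -1) (hs : 0 < s)
    (hr : 6 * r ≤ s) :
    ∃ τ ∈ ({0, 1 / 3} : Finset ℝ), ∃ j : ℤ,
      Icc (u - r) (u + r) ⊆ Ico (s * (j + σ * τ)) (s * (j + σ * τ + 1)) := by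
  obtain ⟨τ, hτ, j, hsub⟩ := exists_Icc_subset_Ico_shift (u / s) (r / s) σ hσ
    (by rw [div_le_iff₀ hs]; linarith)
  refine ⟨τ, hτ, j, fun v hv => ?_⟩
  have hv' : v / s ∈ Icc (u / s - r / s) (u / s + r / s) := by
    rw [← sub_div, ← add_div]
    exact ⟨div_le_div_of_nonneg_right hv.1 hs.le, div_le_div_of_nonneg_right hv.2 hs.le⟩
  obtain ⟨hlo, hhi⟩ := hsub hv'
  rw [le_div_iff₀ hs] at hlo
  rw [div_lt_iff₀ hs] at hhi
  exact ⟨by linarith, by linarith⟩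

lemma exists_closedBall_subset_cplxCube (x : ℂ) (r : ℝ) (k : ℤ) (hr : 6 * r ≤ 2 ^ k) :
    ∃ t ∈ gridShifts, ∃ m : ℤ × ℤ, Metric.closedBall x r ⊆ cplxCube t k m := by
  have hσ : (-1 : ℝ) ^ k = 1 ∨ (-1 : ℝ) ^ k = -1 := by
    rcases Int.even_or_odd k with h | h
    exacts [Or.inl h.neg_one_zpow, Or.inr h.neg_one_zpow]
  have hs : (0 : ℝ) < 2 ^ k := zpow_pos two_pos k
  obtain ⟨τ₁, hτ₁, j₁, hre⟩ := exists_Icc_subset_Ico_shift_scaled x.re r _ _ hσ hs hr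
  obtain ⟨τ₂, hτ₂, j₂, him⟩ := exists_Icc_subset_Ico_shift_scaled x.im r _ _ hσ hs hr
  refine ⟨(τ₁, τ₂), Finset.mem_product.2 ⟨hτ₁, hτ₂⟩, (j₁, j₂), fun z hz => ?_⟩
  rw [Metric.mem_closedBall, dist_comm, dist_eq_norm] at hz
  have hzre := abs_le.1 ((Complex.abs_re_le_norm (x - z)).trans hz)
  have hzim := abs_le.1 ((Complex.abs_im_le_norm (x - z)).trans hz)
  simp only [Complex.sub_re, Complex.sub_im] at hzre hzim
  exact ⟨hre ⟨by linarith, by linarith⟩, him ⟨by linarith, by linarith⟩⟩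

lemma exists_mem_cplxCube_of_ne {x w : ℂ} (hxw : x ≠ w) :
    ∃ t ∈ gridShifts, ∃ (k : ℤ) (m : ℤ × ℤ),
      x ∈ cplxCube t k m ∧ w ∈ cplxCube t k m ∧ (2 : ℝ) ^ k ≤ 16 * ‖x - w‖ := by
  have hr : 0 < ‖x - w‖ := norm_pos_iff.2 (sub_ne_zero.2 hxw)
  obtain ⟨n, hn, hn'⟩ := exists_mem_Ico_zpow (x := 8 * ‖x - w‖) (by positivity) one_lt_two
  have h2k : (2 : ℝ) ^ (n + 1) = 2 * 2 ^ n := by rw [zpow_add_one₀ two_ne_zero]; ring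
  obtain ⟨t, ht, m, hball⟩ := exists_closedBall_subset_cplxCube x ‖x - w‖ (n + 1) (by linarith)
  refine ⟨t, ht, n + 1, m, hball (Metric.mem_closedBall_self hr.le), hball ?_, by linarith⟩
  rw [Metric.mem_closedBall, dist_comm, dist_eq_norm]

lemma cplxCube_eq_preimage_prod (t : ℝ × ℝ) (k : ℤ) (m : ℤ × ℤ) :
    cplxCube t k m = Complex.measurableEquivRealProd ⁻¹'
      (Ico ((2 : ℝ) ^ k * (m.1 + (-1 : ℝ) ^ k * t.1)) ((2 : ℝ) ^ k * (m.1 + (-1 : ℝ) ^ k * t.1 + 1)) ×ˢ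
       Ico ((2 : ℝ) ^ k * (m.2 + (-1 : ℝ) ^ k * t.2)) ((2 : ℝ) ^ k * (m.2 + (-1 : ℝ) ^ k * t.2 + 1))) := by
  ext z
  simp [cplxCube, Complex.measurableEquivRealProd_apply, and_assoc]

lemma measurableSet_cplxCube (t : ℝ × ℝ) (k : ℤ) (m : ℤ × ℤ) :
    MeasurableSet (cplxCube t k m) := by
  rw [cplxCube_eq_preimage_prod]
  exact (measurableSet_Ico.prod measurableSet_Ico).preimage
    Complex.measurableEquivRealProd.measurable

lemma volume_cplxCube (t : ℝ × ℝ) (k : ℤ) (m : ℤ × ℤ) :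
    volume (cplxCube t k m) = ENNReal.ofReal (2 ^ k) ^ 2 := by
  rw [cplxCube_eq_preimage_prod, Complex.volume_preserving_equiv_real_prod.measure_preimage
    (measurableSet_Ico.prod measurableSet_Ico).nullMeasurableSet, Measure.volume_eq_prod,
    Measure.prod_prod, Real.volume_Ico, Real.volume_Ico]
  ring_nf

lemma volume_cplxCube_rpow_mul_inv (t : ℝ × ℝ) (k : ℤ) (m : ℤ × ℤ) :
    volume (cplxCube t k m) ^ ((1 : ℝ) / 2) * (volume (cplxCube t k m))⁻¹ =
      (ENNReal.ofReal (2 ^ k))⁻¹ := by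
  have hp0 : ENNReal.ofReal (2 ^ k) ≠ 0 := (ENNReal.ofReal_pos.2 (zpow_pos two_pos k)).ne'
  have hsqrt : (ENNReal.ofReal (2 ^ k) ^ 2) ^ ((1 : ℝ) / 2) = ENNReal.ofReal (2 ^ k) := by
    rw [← ENNReal.rpow_natCast, ← ENNReal.rpow_mul]
    norm_num
  rw [volume_cplxCube, hsqrt, sq, ENNReal.mul_inv (Or.inl hp0) (Or.inl ENNReal.ofReal_ne_top),
    ← mul_assoc, ENNReal.mul_inv_cancel hp0 ENNReal.ofReal_ne_top, one_mul]

lemma measurable_cplxCube_prod_indicator (t : ℝ × ℝ) (k : ℤ) (m : ℤ × ℤ) (c : ℝ≥0∞) (x : ℂ) :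
    Measurable fun w => (cplxCube t k m ×ˢ cplxCube t k m).indicator (fun _ => c) (x, w) :=
  (measurable_const.indicator
    ((measurableSet_cplxCube t k m).prod (measurableSet_cplxCube t k m))).comp
    measurable_prodMk_left

def dyadicKernel (t : ℝ × ℝ) (x w : ℂ) : ℝ≥0∞ :=
  ∑' (k : ℤ) (m : ℤ × ℤ), (cplxCube t k m ×ˢ cplxCube t k m).indicator
    (fun _ => volume (cplxCube t k m) ^ ((1 : ℝ) / 2) * (volume (cplxCube t k m))⁻¹) (x, w)

lemma measurable_dyadicKernel (t : ℝ × ℝ) (x : ℂ) : Measurable (dyadicKernel t x) :=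
  Measurable.tsum fun k => Measurable.tsum fun m => measurable_cplxCube_prod_indicator t k m _ x

lemma inv_norm_sub_le_sum_dyadicKernel {x w : ℂ} (hxw : x ≠ w) :
    (ENNReal.ofReal ‖x - w‖)⁻¹ ≤ 16 * ∑ t ∈ gridShifts, dyadicKernel t x w := by
  obtain ⟨t, ht, k, m, hx, hw, hk⟩ := exists_mem_cplxCube_of_ne hxw
  have hr : 0 < ‖x - w‖ := norm_pos_iff.2 (sub_ne_zero.2 hxw)
  have hside : (ENNReal.ofReal ‖x - w‖)⁻¹ ≤ 16 * (ENNReal.ofReal (2 ^ k))⁻¹ := by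
    rw [← ENNReal.ofReal_inv_of_pos hr, ← ENNReal.ofReal_inv_of_pos (zpow_pos two_pos k),
      ← ENNReal.ofReal_ofNat, ← ENNReal.ofReal_mul (by norm_num)]
    refine ENNReal.ofReal_le_ofReal ?_
    rw [← div_eq_mul_inv, le_div_iff₀ (zpow_pos two_pos k)]
    calc ‖x - w‖⁻¹ * 2 ^ k ≤ ‖x - w‖⁻¹ * (16 * ‖x - w‖) := by gcongr
      _ = 16 := by field_simp
  have hcube : (ENNReal.ofReal (2 ^ k))⁻¹ ≤ dyadicKernel t x w := by
    rw [← volume_cplxCube_rpow_mul_inv t k m]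
    refine le_trans ?_ (ENNReal.le_tsum k)
    refine le_trans ?_ (ENNReal.le_tsum m)
    rw [indicator_of_mem (mk_mem_prod hx hw)]
  calc (ENNReal.ofReal ‖x - w‖)⁻¹ ≤ 16 * dyadicKernel t x w := hside.trans (by gcongr)
    _ ≤ 16 * ∑ t ∈ gridShifts, dyadicKernel t x w := by
      gcongr
      exact Finset.single_le_sum (f := fun t => dyadicKernel t x w) (fun _ _ => zero_le) ht

lemma cauchyKernel_le_sum_dyadicKernel (b : ℂ → ℂ) (f : ℂ → ℝ≥0∞) (x w : ℂ) :
    ENNReal.ofReal ‖b x - b w‖ / ENNReal.ofReal ‖x - w‖ * f w ≤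
      16 * ∑ t ∈ gridShifts, dyadicKernel t x w * (ENNReal.ofReal ‖b x - b w‖ * f w) := by
  rcases eq_or_ne x w with rfl | hxw
  · simp
  calc ENNReal.ofReal ‖b x - b w‖ / ENNReal.ofReal ‖x - w‖ * f w
      = (ENNReal.ofReal ‖x - w‖)⁻¹ * (ENNReal.ofReal ‖b x - b w‖ * f w) := by
        rw [div_eq_mul_inv]; ring
    _ ≤ (16 * ∑ t ∈ gridShifts, dyadicKernel t x w) * (ENNReal.ofReal ‖b x - b w‖ * f w) := by
        gcongr
        exact inv_norm_sub_le_sum_dyadicKernel hxw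
    _ = _ := by rw [mul_assoc, Finset.sum_mul]

lemma indicator_mul_setLIntegral_eq_lintegral {α : Type*} [MeasurableSpace α] {μ : Measure α}
    {s : Set α} (hs : MeasurableSet s) (c : ℝ≥0∞) (g : α → α → ℝ≥0∞) (x : α)
    (hg : AEMeasurable (g x) μ) :
    s.indicator (fun x' => c * ∫⁻ y in s, g x' y ∂μ) x =
      ∫⁻ y, (s ×ˢ s).indicator (fun _ => c) (x, y) * g x y ∂μ := by
  by_cases hx : x ∈ s
  · have hind : ∀ y, (s ×ˢ s).indicator (fun _ => c) (x, y) * g x y =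
        s.indicator (fun y => c * g x y) y := by
      intro y
      by_cases hy : y ∈ s <;> simp [hx, hy]
    simp_rw [indicator_of_mem hx, hind]
    rw [lintegral_indicator hs, lintegral_const_mul'' _ hg.restrict]
  · simp [hx]

lemma dyadicCauchyComm_eq_lintegral_dyadicKernel (b : ℂ → ℂ) (t : ℝ × ℝ) (f : ℂ → ℝ≥0∞)
    (x : ℂ) (hg : AEMeasurable (fun w => ENNReal.ofReal ‖b x - b w‖ * f w)) :
    dyadicCauchyComm b t f x =
      ∫⁻ w, dyadicKernel t x w * (ENNReal.ofReal ‖b x - b w‖ * f w) := by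
  have hterm : ∀ k m, AEMeasurable (fun w => (cplxCube t k m ×ˢ cplxCube t k m).indicator
      (fun _ => volume (cplxCube t k m) ^ ((1 : ℝ) / 2) * (volume (cplxCube t k m))⁻¹) (x, w) *
        (ENNReal.ofReal ‖b x - b w‖ * f w)) := fun k m =>
    (measurable_cplxCube_prod_indicator t k m _ x).aemeasurable.mul hg
  simp_rw [dyadicKernel, ← ENNReal.tsum_mul_right]
  rw [lintegral_tsum fun k => AEMeasurable.tsum (hterm k), dyadicCauchyComm]
  refine tsum_congr fun k => ?_
  rw [lintegral_tsum (hterm k)]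
  refine tsum_congr fun m => ?_
  simp_rw [← mul_assoc]
  exact (indicator_mul_setLIntegral_eq_lintegral (measurableSet_cplxCube t k m) _
    (fun x' y => ENNReal.ofReal ‖b x' - b y‖ * f y) x hg).trans (by simp only [mul_assoc])

/-- The commutator of the Cauchy transform is pointwise dominated by `16` times the sum
of the four shifted dyadic commutators. -/
theorem cauchyComm_le_sum_dyadic (b : ℂ → ℂ) (hb : LocallyIntegrable b volume)
    (f : ℂ → ℝ≥0∞) (hf : Measurable f) (x : ℂ) :
    cauchyCommAbs b f x ≤
      16 * ∑ t ∈ (({0, 1 / 3} : Finset ℝ) ×ˢ ({0, 1 / 3} : Finset ℝ)),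
        dyadicCauchyComm b t f x := by
  have hg : AEMeasurable (fun w => ENNReal.ofReal ‖b x - b w‖ * f w) :=
    ((aemeasurable_const.sub hb.aestronglyMeasurable.aemeasurable).norm.ennreal_ofReal).mul
      hf.aemeasurable
  calc cauchyCommAbs b f x
      ≤ ∫⁻ w, 16 * ∑ t ∈ gridShifts, dyadicKernel t x w * (ENNReal.ofReal ‖b x - b w‖ * f w) :=
        lintegral_mono (cauchyKernel_le_sum_dyadicKernel b f x)
    _ = 16 * ∑ t ∈ gridShifts, ∫⁻ w, dyadicKernel t x w * (ENNReal.ofReal ‖b x - b w‖ * f w) := by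
        rw [lintegral_const_mul' _ _ (by norm_num)]
        exact congrArg _ (lintegral_finsetSum' _ fun t _ =>
          (measurable_dyadicKernel t x).aemeasurable.mul hg)
    _ = 16 * ∑ t ∈ gridShifts, dyadicCauchyComm b t f x := by
        simp_rw [dyadicCauchyComm_eq_lintegral_dyadicKernel b _ f x hg]
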